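/- Let K be a field, f ∈ K[x_1,…,x_n] nonzero, M an n×n unimodular matrix with nonnegative integer entries, and u ∈ (ℝ_{≥0})^n. Then taking initial parts commutes with the monomial substitution φ_{M^t}: In_u(f∘φ_{M^t}) = (In_{Mu} f)∘φ_{M^t}. -/

import Mathlib

open MvPolynomial Matrix

open Classical in
/-- The `w`-initial part of a multivariate polynomial: the sum of the terms whose
exponents have minimal `w`-weight among the exponents of `f`. -/
noncomputable def initialPart {n : ℕ} {K : Type*} [CommSemiring K] (w : Fin n → ℝ)
    (f : MvPolynomial (Fin n) K) : MvPolynomial (Fin n) K :=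
  ∑ μ ∈ f.support,
    if ∀ ν ∈ f.support, ∑ i, w i * (μ i : ℝ) ≤ ∑ i, w i * (ν i : ℝ)
    then monomial μ (f.coeff μ) else 0

/-- The monomial substitution `φ_M` on polynomials: `x_i ↦ ∏_j x_j ^ (M j i)`,
so that `x^μ ↦ x^(Mμ)`. -/
noncomputable def monomialSubst {n : ℕ} {K : Type*} [CommSemiring K]
    (M : Matrix (Fin n) (Fin n) ℕ) (f : MvPolynomial (Fin n) K) : MvPolynomial (Fin n) K :=
  aeval (fun i => ∏ j, (X j : MvPolynomial (Fin n) K) ^ M j i) f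

/-- A nonnegative integer square matrix is unimodular if its determinant (over `ℤ`) is `±1`. -/
def IsUnimodular {n : ℕ} (M : Matrix (Fin n) (Fin n) ℕ) : Prop :=
  (M.map fun a => (a : ℤ)).det = 1 ∨ (M.map fun a => (a : ℤ)).det = -1

/-! On monomials `φ_{Mᵀ}` acts by `x^μ ↦ x^{Mᵀμ}`, and `u · Mᵀμ = Mu · μ`. Since `Mᵀ` is
nonsingular, `μ ↦ Mᵀμ` is injective, so `φ_{Mᵀ}` carries the terms of `f` bijectively onto those of
`f ∘ φ_{Mᵀ}`, turning `Mu`-weights into `u`-weights; the terms of minimal weight therefore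
correspond. -/

section MapDomain

variable {σ : Type*} {R : Type*} [CommSemiring R] {e : (σ →₀ ℕ) → (σ →₀ ℕ)}

theorem coeff_mapDomain_of_injective (he : Function.Injective e) (p : MvPolynomial σ R)
    (μ : σ →₀ ℕ) : coeff (e μ) (AddMonoidAlgebra.mapDomain e p) = coeff μ p :=
  Finsupp.mapDomain_apply he _ μ

theorem coeff_mapDomain_of_notMem_range {ν : σ →₀ ℕ} (hν : ν ∉ Set.range e)
    (p : MvPolynomial σ R) : coeff ν (AddMonoidAlgebra.mapDomain e p) = 0 :=
  Finsupp.mapDomain_of_notMem_range _ ν hν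

theorem support_mapDomain_of_injective [DecidableEq σ] (he : Function.Injective e)
    (p : MvPolynomial σ R) :
    support (AddMonoidAlgebra.mapDomain e p) = p.support.image e :=
  Finsupp.mapDomain_support_of_injective he _

end MapDomain

section InitialPart

variable {n : ℕ} {K : Type*} [CommSemiring K]

open Classical in
theorem coeff_initialPart (w : Fin n → ℝ) (f : MvPolynomial (Fin n) K) (μ : Fin n →₀ ℕ) :
    coeff μ (initialPart w f) =
      if ∀ ν ∈ f.support, ∑ i, w i * (μ i : ℝ) ≤ ∑ i, w i * (ν i : ℝ) then coeff μ f else 0 := by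
  rw [initialPart, coeff_sum]
  simp only [apply_ite (coeff μ), coeff_monomial, coeff_zero]
  rw [Finset.sum_eq_single μ (fun ν _ hνμ => by simp [hνμ]) (fun hμ => by
    simp [notMem_support_iff.mp hμ])]
  simp

theorem initialPart_mapDomain {e : (Fin n →₀ ℕ) → (Fin n →₀ ℕ)} (he : Function.Injective e)
    {w w' : Fin n → ℝ} (hw : ∀ μ, ∑ i, w i * (e μ i : ℝ) = ∑ i, w' i * (μ i : ℝ))
    (f : MvPolynomial (Fin n) K) :
    initialPart w (AddMonoidAlgebra.mapDomain e f) =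
      AddMonoidAlgebra.mapDomain e (initialPart w' f) := by
  classical
  ext ν
  by_cases hν : ν ∈ Set.range e
  · obtain ⟨μ, rfl⟩ := hν
    simp only [coeff_initialPart, coeff_mapDomain_of_injective he,
      support_mapDomain_of_injective he, Finset.forall_mem_image, hw]
  · simp [coeff_initialPart, coeff_mapDomain_of_notMem_range hν]

end InitialPart

section MonomialSubst

variable {n : ℕ} {K : Type*} [CommSemiring K]

noncomputable def finsuppMulVec (M : Matrix (Fin n) (Fin n) ℕ) (μ : Fin n →₀ ℕ) : Fin n →₀ ℕ :=
  Finsupp.equivFunOnFinite.symm (M *ᵥ ⇑μ)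

theorem finsuppMulVec_apply (M : Matrix (Fin n) (Fin n) ℕ) (μ : Fin n →₀ ℕ) (j : Fin n) :
    finsuppMulVec M μ j = (M *ᵥ ⇑μ) j := rfl

theorem monomialSubst_monomial (M : Matrix (Fin n) (Fin n) ℕ) (μ : Fin n →₀ ℕ) (c : K) :
    monomialSubst M (monomial μ c) = monomial (finsuppMulVec M μ) c := by
  have hcol : ∀ i, (∏ j, (X j : MvPolynomial (Fin n) K) ^ M j i) =
      monomial (∑ j, Finsupp.single j (M j i)) 1 := by
    intro i
    simp only [X_pow_eq_monomial, monomial_sum_one]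
  have hexp : ∑ i, μ i • ∑ j, Finsupp.single j (M j i) = finsuppMulVec M μ := by
    ext j
    simp [finsuppMulVec_apply, Finsupp.finsetSum_apply, Finsupp.single_apply, mulVec,
      dotProduct, mul_comm]
  rw [monomialSubst, aeval_monomial, Finsupp.prod_fintype _ _ (fun _ => pow_zero _)]
  simp only [hcol, monomial_pow, one_pow, ← monomial_sum_one, hexp]
  rw [algebraMap_eq, C_mul_monomial, mul_one]

theorem monomialSubst_eq_mapDomain (M : Matrix (Fin n) (Fin n) ℕ) (f : MvPolynomial (Fin n) K) :
    monomialSubst M f = AddMonoidAlgebra.mapDomain (finsuppMulVec M) f := by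
  induction f using MvPolynomial.induction_on' with
  | monomial μ c =>
    rw [monomialSubst_monomial]
    exact AddMonoidAlgebra.mapDomain_single.symm
  | add p q hp hq =>
    rw [monomialSubst, map_add, ← monomialSubst, ← monomialSubst, hp, hq,
      AddMonoidAlgebra.mapDomain_add]

theorem natCast_finsuppMulVec {R : Type*} [Semiring R] (M : Matrix (Fin n) (Fin n) ℕ)
    (μ : Fin n →₀ ℕ) :
    (fun j => (finsuppMulVec M μ j : R)) = M.map (↑) *ᵥ fun i => (μ i : R) := by
  ext j
  simp [finsuppMulVec_apply, mulVec, dotProduct]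

theorem finsuppMulVec_injective {M : Matrix (Fin n) (Fin n) ℕ}
    (hM : (M.map ((↑) : ℕ → ℤ)).det ≠ 0) : Function.Injective (finsuppMulVec M) := by
  intro μ ν h
  have hz : (fun i => (μ i : ℤ)) = fun i => (ν i : ℤ) :=
    mulVec_injective_of_det_ne_zero hM (by rw [← natCast_finsuppMulVec, h, natCast_finsuppMulVec])
  ext i
  exact_mod_cast congrFun hz i

theorem sum_mul_finsuppMulVec {R : Type*} [Semiring R] (M : Matrix (Fin n) (Fin n) ℕ)
    (u : Fin n → R) (μ : Fin n →₀ ℕ) :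
    ∑ j, u j * (finsuppMulVec M μ j : R) = ∑ i, (u ᵥ* M.map (↑)) i * (μ i : R) := by
  change u ⬝ᵥ (fun j => (finsuppMulVec M μ j : R)) = _
  rw [natCast_finsuppMulVec, dotProduct_mulVec]
  rfl

end MonomialSubst

theorem initialPart_monomialSubst_general {n : ℕ} {K : Type*} [Field K]
    (f : MvPolynomial (Fin n) K)
    (M : Matrix (Fin n) (Fin n) ℕ) (hM : IsUnimodular M)
    (u : Fin n → ℝ) :
    initialPart u (monomialSubst Mᵀ f) =
      monomialSubst Mᵀ (initialPart ((M.map ((↑) : ℕ → ℝ)).mulVec u) f) := by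
  have hdet : (Mᵀ.map ((↑) : ℕ → ℤ)).det ≠ 0 := by
    rw [transpose_map, det_transpose]
    rcases hM with h | h <;> simp [h]
  rw [monomialSubst_eq_mapDomain, monomialSubst_eq_mapDomain]
  refine initialPart_mapDomain (finsuppMulVec_injective hdet) (fun μ => ?_) f
  rw [sum_mul_finsuppMulVec, transpose_map, vecMul_transpose]

/-- Taking initial parts commutes with the monomial substitution `φ_{Mᵀ}`:
for `M` a nonnegative unimodular matrix and `u` a nonnegative vector,
`In_u (f ∘ φ_{Mᵀ}) = (In_{Mu} f) ∘ φ_{Mᵀ}`. -/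
theorem initialPart_monomialSubst {n : ℕ} {K : Type*} [Field K]
    (f : MvPolynomial (Fin n) K) (hf : f ≠ 0)
    (M : Matrix (Fin n) (Fin n) ℕ) (hM : IsUnimodular M)
    (u : Fin n → ℝ) (hu : ∀ i, 0 ≤ u i) :
    initialPart u (monomialSubst Mᵀ f) =
      monomialSubst Mᵀ (initialPart ((M.map ((↑) : ℕ → ℝ)).mulVec u) f) :=
  initialPart_monomialSubst_general f M hM u
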